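/- arXiv:2103.02920 — 4 statements merged into one kernel-verified Lean document; each statement's English description precedes it below -/
import Mathlib

section
/- Let Π be an N×N matrix with nonnegative entries and γ > 1. Define Λ(x) := sup { ∑ᵢ yᵢ + γ ∑ᵢ bᵢ | y ∈ (−∞,0]^N, b ∈ (−∞,0]^N, ∀i: xᵢ ≥ bᵢ + yᵢ − ∑ⱼ Π_{ji} yⱼ }. Then Λ : ℝ^N → ℝ is increasing with respect to the componentwise order, concave, and Λ(0) = 0, provided ∑ⱼ Π_{ji} ≤ 1 for each i. -/
open scoped BigOperators Pointwise

/-- The Chen–Iyengar–Moallemi network aggregation function: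
`Λ(x) = sup { ∑ᵢ yᵢ + γ ∑ᵢ bᵢ | y, b ∈ (−∞,0]^N, ∀ i : xᵢ ≥ bᵢ + yᵢ − ∑ⱼ Π_{ji} yⱼ }`. -/
noncomputable def lambdaNetwork {N : ℕ} (P : Fin N → Fin N → ℝ) (γ : ℝ)
    (x : Fin N → ℝ) : ℝ :=
  sSup {s : ℝ | ∃ y b : Fin N → ℝ, (∀ i, y i ≤ 0) ∧ (∀ i, b i ≤ 0) ∧
    (∀ i, b i + y i - ∑ j, P j i * y j ≤ x i) ∧ s = (∑ i, y i) + γ * ∑ i, b i}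

/-! Every feasible value is `≤ 0` (as `y, b ≤ 0` and `γ ≥ 0`), and `0` is feasible at `x = 0`,
so `Λ(0) = 0` and all the suprema are finite. The constraints are monotone in `x` and jointly
linear in `(x, y, b)`, so the feasible-value sets grow with `x` and a convex combination of
feasible values is feasible at the convex combination of the points; taking suprema gives
monotonicity and concavity. -/

theorem concaveOn_univ_sSup {E : Type*} [AddCommMonoid E] [Module ℝ E] (S : E → Set ℝ)
    (hne : ∀ x, (S x).Nonempty) (hbdd : ∀ x, BddAbove (S x))
    (hcomb : ∀ x₁ x₂ : E, ∀ a c : ℝ, 0 ≤ a → 0 ≤ c → a + c = 1 →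
      a • S x₁ + c • S x₂ ⊆ S (a • x₁ + c • x₂)) :
    ConcaveOn ℝ Set.univ (fun x => sSup (S x)) := by
  refine ⟨convex_univ, fun x₁ _ x₂ _ a c ha hc hac => ?_⟩
  calc a • sSup (S x₁) + c • sSup (S x₂)
      = sSup (a • S x₁ + c • S x₂) := by
        rw [csSup_add ((hne x₁).smul_set) ((hbdd x₁).smul_of_nonneg ha) ((hne x₂).smul_set)
            ((hbdd x₂).smul_of_nonneg hc), Real.sSup_smul_of_nonneg ha,
          Real.sSup_smul_of_nonneg hc]
    _ ≤ sSup (S (a • x₁ + c • x₂)) :=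
        csSup_le_csSup (hbdd _) ((hne x₁).smul_set.add (hne x₂).smul_set)
          (hcomb x₁ x₂ a c ha hc hac)

namespace lambdaNetwork

variable {N : ℕ} (P : Fin N → Fin N → ℝ) (γ : ℝ)

def feasibleValues (x : Fin N → ℝ) : Set ℝ :=
  {s : ℝ | ∃ y b : Fin N → ℝ, (∀ i, y i ≤ 0) ∧ (∀ i, b i ≤ 0) ∧
    (∀ i, b i + y i - ∑ j, P j i * y j ≤ x i) ∧ s = (∑ i, y i) + γ * ∑ i, b i}

theorem feasibleValues_nonempty (x : Fin N → ℝ) : (feasibleValues P γ x).Nonempty :=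
  ⟨_, 0, fun i => min (x i) 0, fun _ => le_rfl, fun _ => min_le_right _ _,
    fun i => by simp, rfl⟩

theorem zero_mem_feasibleValues_zero : (0 : ℝ) ∈ feasibleValues P γ 0 :=
  ⟨0, 0, fun _ => le_rfl, fun _ => le_rfl, fun _ => by simp, by simp⟩

variable {P γ}

theorem nonpos_of_mem_feasibleValues (hγ : 0 ≤ γ) {x : Fin N → ℝ} {s : ℝ}
    (hs : s ∈ feasibleValues P γ x) : s ≤ 0 := by
  obtain ⟨y, b, hy, hb, -, rfl⟩ := hs
  have hy' : ∑ i, y i ≤ 0 := Finset.sum_nonpos fun i _ => hy i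
  have hb' : γ * ∑ i, b i ≤ 0 :=
    mul_nonpos_of_nonneg_of_nonpos hγ (Finset.sum_nonpos fun i _ => hb i)
  linarith

theorem bddAbove_feasibleValues (hγ : 0 ≤ γ) (x : Fin N → ℝ) :
    BddAbove (feasibleValues P γ x) :=
  ⟨0, fun _ => nonpos_of_mem_feasibleValues hγ⟩

theorem feasibleValues_mono : Monotone (feasibleValues P γ) := by
  rintro x x' hx _ ⟨y, b, hy, hb, hxyb, rfl⟩
  exact ⟨y, b, hy, hb, fun i => (hxyb i).trans (hx i), rfl⟩

theorem smul_add_smul_feasibleValues_subset {a c : ℝ} (ha : 0 ≤ a) (hc : 0 ≤ c)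
    (x₁ x₂ : Fin N → ℝ) :
    a • feasibleValues P γ x₁ + c • feasibleValues P γ x₂ ⊆
      feasibleValues P γ (a • x₁ + c • x₂) := by
  rintro _ ⟨_, ⟨_, ⟨y₁, b₁, hy₁, hb₁, h₁, rfl⟩, rfl⟩, _, ⟨_, ⟨y₂, b₂, hy₂, hb₂, h₂, rfl⟩, rfl⟩,
    rfl⟩
  refine ⟨a • y₁ + c • y₂, a • b₁ + c • b₂, fun i => ?_, fun i => ?_, fun i => ?_, ?_⟩
  · exact add_nonpos (mul_nonpos_of_nonneg_of_nonpos ha (hy₁ i))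
      (mul_nonpos_of_nonneg_of_nonpos hc (hy₂ i))
  · exact add_nonpos (mul_nonpos_of_nonneg_of_nonpos ha (hb₁ i))
      (mul_nonpos_of_nonneg_of_nonpos hc (hb₂ i))
  · have hsum : ∑ j, P j i * (a * y₁ j + c * y₂ j) =
        a * ∑ j, P j i * y₁ j + c * ∑ j, P j i * y₂ j := by
      simp only [Finset.mul_sum, ← Finset.sum_add_distrib]
      exact Finset.sum_congr rfl fun j _ => by ring
    simp only [Pi.add_apply, Pi.smul_apply, smul_eq_mul, hsum]
    linarith [mul_le_mul_of_nonneg_left (h₁ i) ha, mul_le_mul_of_nonneg_left (h₂ i) hc]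
  · simp only [Pi.add_apply, Pi.smul_apply, smul_eq_mul, Finset.sum_add_distrib,
      ← Finset.mul_sum]
    ring

end lambdaNetwork

section

open lambdaNetwork

variable {N : ℕ} {P : Fin N → Fin N → ℝ} {γ : ℝ}

theorem monotone_lambdaNetwork (hγ : 0 ≤ γ) : Monotone (lambdaNetwork P γ) := fun x x' hx =>
  csSup_le_csSup (bddAbove_feasibleValues hγ x') (feasibleValues_nonempty P γ x)
    (feasibleValues_mono hx)

theorem concaveOn_lambdaNetwork (hγ : 0 ≤ γ) : ConcaveOn ℝ Set.univ (lambdaNetwork P γ) :=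
  concaveOn_univ_sSup _ (feasibleValues_nonempty P γ) (bddAbove_feasibleValues hγ)
    fun x₁ x₂ _ _ ha hc _ => smul_add_smul_feasibleValues_subset ha hc x₁ x₂

theorem lambdaNetwork_zero (hγ : 0 ≤ γ) : lambdaNetwork P γ 0 = 0 :=
  le_antisymm
    (csSup_le (feasibleValues_nonempty P γ 0) fun _ => nonpos_of_mem_feasibleValues hγ)
    (le_csSup (bddAbove_feasibleValues hγ 0) (zero_mem_feasibleValues_zero P γ))

end

theorem stmt_6_general {N : ℕ} (P : Fin N → Fin N → ℝ) (γ : ℝ)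
    (hγ : 1 < γ) :
    Monotone (lambdaNetwork P γ) ∧ ConcaveOn ℝ Set.univ (lambdaNetwork P γ) ∧
      lambdaNetwork P γ 0 = 0 := by
  have hγ₀ : 0 ≤ γ := zero_le_one.trans hγ.le
  exact ⟨monotone_lambdaNetwork hγ₀, concaveOn_lambdaNetwork hγ₀, lambdaNetwork_zero hγ₀⟩

/-- the network aggregation function is increasing (componentwise
order), concave and satisfies Λ(0) = 0, provided Π has nonnegative entries,
γ > 1 and ∑ⱼ Π_{ji} ≤ 1 for each i. -/
theorem stmt_6 {N : ℕ} (P : Fin N → Fin N → ℝ) (γ : ℝ)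
    (hP : ∀ j i, 0 ≤ P j i) (hγ : 1 < γ) (hcol : ∀ i, ∑ j, P j i ≤ 1) :
    Monotone (lambdaNetwork P γ) ∧ ConcaveOn ℝ Set.univ (lambdaNetwork P γ) ∧
      lambdaNetwork P γ 0 = 0 :=
  stmt_6_general P γ hγ
end

section
/- Let Ψ : C_Z → ℝ be an increasing convex functional on the space C_Z of continuous functions X : Ω → ℝ^N with X/Z componentwise bounded, where Z : Ω → [1,∞) is continuous with compact sublevel sets. Suppose for every n ∈ ℕ, lim_{z→∞} Ψ(n(Z−z)⁺·𝟏) = Ψ(0). Then for every X ∈ C_Z there exists ε > 0 such that lim_{z→∞} Ψ(X + ε(Z−z)⁺·𝟏) = Ψ(X). -/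
open Filter Topology

/-!
Take `ε = 1`. Monotonicity gives `Ψ X ≤ Ψ (X + w)` with `w = (Z - z)⁺·𝟏 ≥ 0`. Conversely, for
`0 < u ≤ 1/2` and `n ≥ 1/u`, the point `X + w` lies below `X + u • (n • w)`, which is the convex
combination `(1 - 2u) X + 2u (½ (2X) + ½ (n • w))`; hence
`Ψ (X + w) ≤ Ψ X + u (Ψ (2X) - 2 Ψ X + Ψ (n • w))`, and the tail condition makes the bracket
eventually at most `Ψ (2X) - 2 Ψ X + Ψ 0 + 1`. Letting `u → 0` gives the limit.
-/

section ConvexTail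

variable {E : Type*} [AddCommGroup E] [Module ℝ E] {S : Submodule ℝ E} {Ψ : E → ℝ}

lemma ConvexOn.apply_add_smul_le (hΨ : ConvexOn ℝ S Ψ) {x y : E} (hx : x ∈ S) (hy : y ∈ S)
    {u : ℝ} (hu₀ : 0 ≤ u) (hu : u ≤ 1 / 2) :
    Ψ (x + u • y) ≤ Ψ x + u * (Ψ ((2 : ℝ) • x) - 2 * Ψ x + Ψ y) := by
  set m := (1 / 2 : ℝ) • ((2 : ℝ) • x) + (1 / 2 : ℝ) • y
  have h2x : (2 : ℝ) • x ∈ S := S.smul_mem _ hx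
  have hm : Ψ m ≤ (1 / 2 : ℝ) • Ψ ((2 : ℝ) • x) + (1 / 2 : ℝ) • Ψ y :=
    hΨ.2 h2x hy (by norm_num) (by norm_num) (by norm_num)
  have hsplit : x + u • y = (1 - 2 * u) • x + (2 * u) • m := by
    simp only [m, smul_add, smul_smul]
    module
  have houter : Ψ ((1 - 2 * u) • x + (2 * u) • m) ≤ (1 - 2 * u) • Ψ x + (2 * u) • Ψ m :=
    hΨ.2 hx (S.add_mem (S.smul_mem _ h2x) (S.smul_mem _ hy))
      (by linarith) (by linarith) (by ring)
  rw [hsplit]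
  simp only [smul_eq_mul] at hm houter
  linarith [mul_le_mul_of_nonneg_left hm (by linarith : (0 : ℝ) ≤ 2 * u)]

variable [PartialOrder E] [IsOrderedAddMonoid E] [SMulPosMono ℝ E] (hΨ : ConvexOn ℝ S Ψ) (hmono : MonotoneOn Ψ S)
  {α : Type*} {l : Filter α} {x : E} (hx : x ∈ S) {w : α → E} (hwS : ∀ a, w a ∈ S)
  (hw₀ : ∀ a, 0 ≤ w a) (htail : ∀ n : ℕ, Tendsto (fun a => Ψ ((n : ℝ) • w a)) l (𝓝 (Ψ 0)))
include hΨ hmono hx hwS hw₀ htail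

lemma eventually_apply_add_le {u : ℝ} (hu₀ : 0 < u) (hu : u ≤ 1 / 2) :
    ∀ᶠ a in l, Ψ (x + w a) ≤ Ψ x + u * (Ψ ((2 : ℝ) • x) - 2 * Ψ x + Ψ 0 + 1) := by
  set n := ⌈u⁻¹⌉₊
  have hun : 1 ≤ u * n := by
    calc (1 : ℝ) = u * u⁻¹ := (mul_inv_cancel₀ hu₀.ne').symm
      _ ≤ u * n := mul_le_mul_of_nonneg_left (Nat.le_ceil _) hu₀.le
  filter_upwards [(htail n).eventually_lt_const (lt_add_one (Ψ 0))] with a ha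
  have hnw : (n : ℝ) • w a ∈ S := S.smul_mem _ (hwS a)
  have hw_le : w a ≤ u • ((n : ℝ) • w a) := by
    rw [smul_smul]
    exact le_smul_of_one_le_left (hw₀ a) hun
  calc Ψ (x + w a) ≤ Ψ (x + u • ((n : ℝ) • w a)) :=
        hmono (S.add_mem hx (hwS a)) (S.add_mem hx (S.smul_mem _ hnw)) (by gcongr)
    _ ≤ Ψ x + u * (Ψ ((2 : ℝ) • x) - 2 * Ψ x + Ψ ((n : ℝ) • w a)) :=
        hΨ.apply_add_smul_le hx hnw hu₀.le hu
    _ ≤ Ψ x + u * (Ψ ((2 : ℝ) • x) - 2 * Ψ x + Ψ 0 + 1) := by gcongr Ψ x + u * ?_; linarith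

theorem tendsto_apply_add_of_tendsto_natCast_smul :
    Tendsto (fun a => Ψ (x + w a)) l (𝓝 (Ψ x)) := by
  rw [tendsto_order]
  refine ⟨fun b hb => .of_forall fun a => hb.trans_le
    (hmono hx (S.add_mem hx (hwS a)) (le_add_of_nonneg_right (hw₀ a))), fun b hb => ?_⟩
  set K := Ψ ((2 : ℝ) • x) - 2 * Ψ x + Ψ 0 + 1
  have hlim : Tendsto (fun u : ℝ => Ψ x + u * K) (𝓝[>] 0) (𝓝 (Ψ x)) := by
    have := (continuous_const.add (continuous_id.mul continuous_const)).tendsto (0 : ℝ)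
      (f := fun u : ℝ => Ψ x + u * K)
    simpa using tendsto_nhdsWithin_of_tendsto_nhds this
  obtain ⟨u, hub, hu₀, hu⟩ := ((hlim.eventually_lt_const hb).and
    (Ioc_mem_nhdsGT (by norm_num : (0 : ℝ) < 1 / 2))).exists
  filter_upwards [eventually_apply_add_le hΨ hmono hx hwS hw₀ htail hu₀ hu] with a ha
  exact ha.trans_lt hub

end ConvexTail

section WeightedContinuous

variable {Ω ι : Type*} [TopologicalSpace Ω]

def weightedContinuous (Z : Ω → ℝ) : Submodule ℝ (Ω → ι → ℝ) where
  carrier := {X | Continuous X ∧ ∀ i, ∃ M : ℝ, ∀ ω, |X ω i| ≤ M * Z ω}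
  zero_mem' := ⟨continuous_const, fun _ => ⟨0, fun ω => by simp⟩⟩
  add_mem' := by
    rintro X Y ⟨hXc, hXb⟩ ⟨hYc, hYb⟩
    refine ⟨hXc.add hYc, fun i => ?_⟩
    obtain ⟨M, hM⟩ := hXb i
    obtain ⟨M', hM'⟩ := hYb i
    exact ⟨M + M', fun ω => (abs_add_le _ _).trans (by linarith [hM ω, hM' ω])⟩
  smul_mem' := by
    rintro c X ⟨hXc, hXb⟩
    refine ⟨hXc.const_smul c, fun i => ?_⟩
    obtain ⟨M, hM⟩ := hXb i
    refine ⟨|c| * M, fun ω => ?_⟩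
    simpa [abs_mul, mul_assoc] using mul_le_mul_of_nonneg_left (hM ω) (abs_nonneg c)

lemma posPart_sub_mem_weightedContinuous {Z : Ω → ℝ} (hZc : Continuous Z) (hZ₁ : ∀ ω, 1 ≤ Z ω)
    (z : ℝ) : (fun ω (_ : ι) => max (Z ω - z) 0) ∈ weightedContinuous Z := by
  refine ⟨continuous_pi fun _ => (hZc.sub continuous_const).max continuous_const,
    fun _ => ⟨1 + |z|, fun ω => ?_⟩⟩
  rw [abs_of_nonneg (le_max_right _ _)]
  have := hZ₁ ω
  have := neg_abs_le z
  exact max_le (by nlinarith [abs_nonneg z]) (by nlinarith [abs_nonneg z])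

end WeightedContinuous

theorem stmt_7_general {Ω : Type*} [MetricSpace Ω] {N : ℕ}
    (Z : Ω → ℝ) (hZc : Continuous Z) (hZ1 : ∀ ω, 1 ≤ Z ω)
    (CZ : Set (Ω → Fin N → ℝ))
    (hCZ : CZ = {X : Ω → Fin N → ℝ | Continuous X ∧ ∀ i, ∃ M : ℝ, ∀ ω, |X ω i| ≤ M * Z ω})
    (Ψ : (Ω → Fin N → ℝ) → ℝ)
    (hmono : ∀ X ∈ CZ, ∀ Y ∈ CZ, (∀ ω, X ω ≤ Y ω) → Ψ X ≤ Ψ Y)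
    (hconv : ∀ X ∈ CZ, ∀ Y ∈ CZ, ∀ t : ℝ, 0 ≤ t → t ≤ 1 →
      Ψ (fun ω i => t * X ω i + (1 - t) * Y ω i) ≤ t * Ψ X + (1 - t) * Ψ Y)
    (htail : ∀ n : ℕ, Tendsto (fun z : ℝ => Ψ (fun ω _ => (n : ℝ) * max (Z ω - z) 0))
      atTop (nhds (Ψ 0))) :
    ∀ X ∈ CZ, ∃ ε > (0 : ℝ), Tendsto
      (fun z : ℝ => Ψ (fun ω i => X ω i + ε * max (Z ω - z) 0)) atTop (nhds (Ψ X)) := by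
  subst hCZ
  set S : Submodule ℝ (Ω → Fin N → ℝ) := weightedContinuous Z
  have hΨ : ConvexOn ℝ (S : Set (Ω → Fin N → ℝ)) Ψ := by
    refine ⟨S.convex, fun X hX Y hY a b ha hb hab => ?_⟩
    obtain rfl : b = 1 - a := by linarith
    exact hconv X hX Y hY a ha (by linarith)
  intro X hX
  refine ⟨1, one_pos, ?_⟩
  simpa only [one_mul, Pi.add_def] using tendsto_apply_add_of_tendsto_natCast_smul hΨ
    (fun X hX Y hY => hmono X hX Y hY) hX (posPart_sub_mem_weightedContinuous hZc hZ1)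
    (fun z ω _ => le_max_right _ _) htail

/-- for an increasing convex functional Ψ on C_Z, the tail condition
`lim_{z→∞} Ψ(n(Z−z)⁺·𝟏) = Ψ(0)` for every n implies that for every X ∈ C_Z there is
ε > 0 with `lim_{z→∞} Ψ(X + ε(Z−z)⁺·𝟏) = Ψ(X)`. -/
theorem stmt_7 {Ω : Type*} [MetricSpace Ω] [Nonempty Ω] {N : ℕ}
    (Z : Ω → ℝ) (hZc : Continuous Z) (hZ1 : ∀ ω, 1 ≤ Z ω)
    (hZcomp : ∀ z : ℝ, IsCompact {ω | Z ω ≤ z})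
    (CZ : Set (Ω → Fin N → ℝ))
    (hCZ : CZ = {X : Ω → Fin N → ℝ | Continuous X ∧ ∀ i, ∃ M : ℝ, ∀ ω, |X ω i| ≤ M * Z ω})
    (Ψ : (Ω → Fin N → ℝ) → ℝ)
    (hmono : ∀ X ∈ CZ, ∀ Y ∈ CZ, (∀ ω, X ω ≤ Y ω) → Ψ X ≤ Ψ Y)
    (hconv : ∀ X ∈ CZ, ∀ Y ∈ CZ, ∀ t : ℝ, 0 ≤ t → t ≤ 1 →
      Ψ (fun ω i => t * X ω i + (1 - t) * Y ω i) ≤ t * Ψ X + (1 - t) * Ψ Y)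
    (htail : ∀ n : ℕ, Tendsto (fun z : ℝ => Ψ (fun ω _ => (n : ℝ) * max (Z ω - z) 0))
      atTop (nhds (Ψ 0))) :
    ∀ X ∈ CZ, ∃ ε > (0 : ℝ), Tendsto
      (fun z : ℝ => Ψ (fun ω i => X ω i + ε * max (Z ω - z) 0)) atTop (nhds (Ψ X)) :=
  stmt_7_general Z hZc hZ1 CZ hCZ Ψ hmono hconv htail
end

section
/- Let Ψ : C_Z → ℝ be an increasing convex functional, X ∈ C_Z fixed, and set Ψ_X(Y) := Ψ(X+Y) − Ψ(X). Suppose there exists ε > 0 with lim_{z→∞} Ψ(X + ε(Z−z)⁺·𝟏) = Ψ(X). Then for every sequence (X_n) in C_Z with X_n ↓ 0 pointwise, there exists η > 0 such that Ψ_X(η X_n) ↓ 0. -/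
/-!
Bound `η Xₙ` by `c/2 + (ε/2)(Z - z)⁺` for a small constant `c`, a large level `z` and a late
index `n`: on the compact set `{Z ≤ 2z}` Dini's theorem makes `η Xₙ < c/2`, and off it the linear
growth `Xₙ ≤ X₀ ≤ M Z` with `η = ε / 4M` gives `η Xₙ ≤ εZ/4 ≤ (ε/2)(Z - z)`. Monotonicity and
convexity then give `Ψ(X + η Xₙ) ≤ ½ Ψ(X + c) + ½ Ψ(X + ε(Z - z)⁺)`, and both terms are close to
`Ψ(X)`: the first by convexity along the segment from `X` to `X + 1`, the second by hypothesis.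
-/

open Filter Topology

section WeightedSpace

variable {Ω : Type*} [TopologicalSpace Ω] {ι : Type*} {Z : Ω → ℝ}

/-- The space `C_Z`. -/
def weightedSpace (ι : Type*) (Z : Ω → ℝ) : Submodule ℝ (Ω → ι → ℝ) where
  carrier := {X | Continuous X ∧ ∀ i, ∃ M : ℝ, ∀ ω, |X ω i| ≤ M * Z ω}
  add_mem' := by
    rintro X Y ⟨hXc, hX⟩ ⟨hYc, hY⟩
    refine ⟨hXc.add hYc, fun i => ?_⟩
    obtain ⟨A, hA⟩ := hX i
    obtain ⟨B, hB⟩ := hY i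
    exact ⟨A + B, fun ω => (abs_add_le _ _).trans (by linarith [hA ω, hB ω])⟩
  zero_mem' := ⟨continuous_const, fun _ => ⟨0, fun ω => by simp⟩⟩
  smul_mem' := by
    rintro c X ⟨hXc, hX⟩
    refine ⟨hXc.const_smul c, fun i => ?_⟩
    obtain ⟨A, hA⟩ := hX i
    refine ⟨|c| * A, fun ω => ?_⟩
    simpa [abs_mul, mul_assoc] using mul_le_mul_of_nonneg_left (hA ω) (abs_nonneg c)

def excess (Z : Ω → ℝ) (z : ℝ) : Ω → ι → ℝ := fun ω _ => max (Z ω - z) 0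

lemma one_mem_weightedSpace (hZ1 : ∀ ω, 1 ≤ Z ω) : (1 : Ω → ι → ℝ) ∈ weightedSpace ι Z :=
  ⟨continuous_const, fun _ => ⟨1, fun ω => by simpa using hZ1 ω⟩⟩

lemma excess_mem_weightedSpace (hZc : Continuous Z) (hZ0 : ∀ ω, 0 ≤ Z ω) {z : ℝ} (hz : 0 ≤ z) :
    (excess Z z : Ω → ι → ℝ) ∈ weightedSpace ι Z := by
  refine ⟨continuous_pi fun _ => (hZc.sub continuous_const).max continuous_const,
    fun _ => ⟨1, fun ω => ?_⟩⟩
  rw [one_mul, excess, abs_of_nonneg (le_max_right _ _)]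
  exact max_le (by linarith) (hZ0 ω)

lemma exists_pos_bound_of_mem_weightedSpace [Finite ι] (hZ0 : ∀ ω, 0 ≤ Z ω)
    {X : Ω → ι → ℝ} (hX : X ∈ weightedSpace ι Z) : ∃ M > 0, ∀ ω i, X ω i ≤ M * Z ω := by
  choose A hA using hX.2
  obtain ⟨M, hM⟩ := Finite.exists_le A
  refine ⟨max M 1, by positivity, fun ω i => ?_⟩
  calc X ω i ≤ |X ω i| := le_abs_self _
    _ ≤ A i * Z ω := hA i ω
    _ ≤ max M 1 * Z ω := mul_le_mul_of_nonneg_right ((hM i).trans (le_max_left _ _)) (hZ0 ω)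

end WeightedSpace

lemma ConvexOn.eventually_lt_add {E : Type*} [AddCommGroup E] [Module ℝ E] {s : Set E}
    {Ψ : E → ℝ} (hΨ : ConvexOn ℝ s Ψ) {x y : E} (hx : x ∈ s) (hy : y ∈ s) {δ : ℝ} (hδ : 0 < δ) :
    ∀ᶠ t in 𝓝[>] (0 : ℝ), Ψ (x + t • (y - x)) < Ψ x + δ := by
  have hchord : Tendsto (fun t : ℝ => Ψ x + t * (Ψ y - Ψ x)) (𝓝[>] 0) (𝓝 (Ψ x)) := by
    have hcont : Continuous fun t : ℝ => Ψ x + t * (Ψ y - Ψ x) := by fun_prop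
    simpa using (hcont.tendsto 0).mono_left nhdsWithin_le_nhds
  filter_upwards [hchord.eventually_lt_const (lt_add_of_pos_right _ hδ), Ioo_mem_nhdsGT one_pos]
    with t ht ht01
  calc Ψ (x + t • (y - x)) = Ψ ((1 - t) • x + t • y) := by congr 1; module
    _ ≤ (1 - t) • Ψ x + t • Ψ y := hΨ.2 hx hy (by linarith [ht01.2]) ht01.1.le (by ring)
    _ = Ψ x + t * (Ψ y - Ψ x) := by simp only [smul_eq_mul]; ring
    _ < Ψ x + δ := ht

/-- Dini's theorem, in the form of a uniform bound on a compact set. -/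
lemma eventually_forall_lt_of_antitone_tendsto_zero {Ω ι : Type*} [TopologicalSpace Ω] [Finite ι]
    {K : Set Ω} (hK : IsCompact K) {F : ℕ → Ω → ι → ℝ} (hF : ∀ n, Continuous (F n))
    (hanti : ∀ ω i, Antitone (F · ω i)) (hlim : ∀ ω i, Tendsto (F · ω i) atTop (𝓝 0))
    {c : ℝ} (hc : 0 < c) : ∀ᶠ n in atTop, ∀ ω ∈ K, ∀ i, F n ω i < c := by
  have hunif : ∀ i, TendstoUniformlyOn (fun n ω => F n ω i) 0 atTop K := fun i =>
    Antitone.tendstoUniformlyOn_of_forall_tendsto hK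
      (fun n => ((continuous_apply i).comp (hF n)).continuousOn) (fun ω _ => hanti ω i)
      continuousOn_const (fun ω _ => hlim ω i)
  filter_upwards [eventually_all.2 fun i => Metric.tendstoUniformlyOn_iff.1 (hunif i) c hc]
    with n hn ω hω i
  have hdist := hn i ω hω
  rw [Pi.zero_apply, dist_zero_left, Real.norm_eq_abs] at hdist
  exact (le_abs_self _).trans_lt hdist

lemma exists_lt_add_of_tendsto_excess {Ω ι : Type*} [TopologicalSpace Ω] [Finite ι]
    {Z : Ω → ℝ} (hZc : Continuous Z) (hZ1 : ∀ ω, 1 ≤ Z ω)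
    (hZcomp : ∀ z : ℝ, IsCompact {ω | Z ω ≤ z}) {Ψ : (Ω → ι → ℝ) → ℝ}
    (hconv : ConvexOn ℝ (weightedSpace ι Z : Set (Ω → ι → ℝ)) Ψ)
    (hmono : MonotoneOn Ψ (weightedSpace ι Z : Set (Ω → ι → ℝ)))
    {X : Ω → ι → ℝ} (hX : X ∈ weightedSpace ι Z) {ε : ℝ} (hε : 0 < ε)
    (htail : Tendsto (fun z => Ψ (X + ε • excess Z z)) atTop (𝓝 (Ψ X)))
    {Xn : ℕ → Ω → ι → ℝ} (hXn : ∀ n, Xn n ∈ weightedSpace ι Z)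
    (hanti : ∀ ω i, Antitone (Xn · ω i)) (hlim : ∀ ω i, Tendsto (Xn · ω i) atTop (𝓝 0))
    {M : ℝ} (hM : 0 < M) (hbound : ∀ n ω i, Xn n ω i ≤ M * Z ω) {δ : ℝ} (hδ : 0 < δ) :
    ∃ n, Ψ (X + (ε / (4 * M)) • Xn n) < Ψ X + δ := by
  set η := ε / (4 * M) with hη_def
  have hη : 0 < η := by positivity
  have hZ0 : ∀ ω, 0 ≤ Z ω := fun ω => zero_le_one.trans (hZ1 ω)
  have hX1 : X + 1 ∈ weightedSpace ι Z := add_mem hX (one_mem_weightedSpace hZ1)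
  obtain ⟨c, hcΨ, hc : 0 < c⟩ :=
    ((hconv.eventually_lt_add hX hX1 hδ).and self_mem_nhdsWithin).exists
  rw [add_sub_cancel_left] at hcΨ
  obtain ⟨z, hzΨ, hz⟩ :=
    ((htail.eventually_lt_const (lt_add_of_pos_right _ hδ)).and (eventually_ge_atTop 0)).exists
  obtain ⟨n, hn⟩ := (eventually_forall_lt_of_antitone_tendsto_zero (hZcomp (2 * z))
    (fun n => (hXn n).1) hanti hlim (show 0 < c / (2 * η) by positivity)).exists
  have hdom : X + η • Xn n ≤ (1 / 2 : ℝ) • (X + c • 1) + (1 / 2 : ℝ) • (X + ε • excess Z z) := by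
    intro ω i
    suffices η * Xn n ω i ≤ c / 2 + ε / 2 * max (Z ω - z) 0 by
      simp only [excess, Pi.add_apply, Pi.smul_apply, Pi.one_apply, smul_eq_mul]; linarith
    rcases le_or_gt (Z ω) (2 * z) with hK | hK
    · have hsmall := hn ω hK i
      rw [lt_div_iff₀ (by positivity)] at hsmall
      nlinarith [le_max_right (Z ω - z) 0]
    · calc η * Xn n ω i ≤ η * (M * Z ω) := mul_le_mul_of_nonneg_left (hbound n ω i) hη.le
        _ = ε / 4 * Z ω := by rw [hη_def]; field_simp
        _ ≤ c / 2 + ε / 2 * max (Z ω - z) 0 := by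
          nlinarith [le_max_left (Z ω - z) 0, hc]
  have hXc : X + c • 1 ∈ weightedSpace ι Z :=
    add_mem hX (Submodule.smul_mem _ c (one_mem_weightedSpace hZ1))
  have hXz : X + ε • excess Z z ∈ weightedSpace ι Z :=
    add_mem hX (Submodule.smul_mem _ ε (excess_mem_weightedSpace hZc hZ0 hz))
  refine ⟨n, ?_⟩
  calc Ψ (X + η • Xn n)
      ≤ Ψ ((1 / 2 : ℝ) • (X + c • 1) + (1 / 2 : ℝ) • (X + ε • excess Z z)) :=
        hmono (add_mem hX (Submodule.smul_mem _ η (hXn n)))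
          (hconv.1 hXc hXz (by norm_num) (by norm_num) (by norm_num)) hdom
    _ ≤ (1 / 2 : ℝ) • Ψ (X + c • 1) + (1 / 2 : ℝ) • Ψ (X + ε • excess Z z) :=
        hconv.2 hXc hXz (by norm_num) (by norm_num) (by norm_num)
    _ < Ψ X + δ := by simp only [smul_eq_mul]; linarith

theorem stmt_8_general {Ω : Type*} [MetricSpace Ω] {N : ℕ}
    (Z : Ω → ℝ) (hZc : Continuous Z) (hZ1 : ∀ ω, 1 ≤ Z ω)
    (hZcomp : ∀ z : ℝ, IsCompact {ω | Z ω ≤ z})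
    (CZ : Set (Ω → Fin N → ℝ))
    (hCZ : CZ = {X : Ω → Fin N → ℝ | Continuous X ∧ ∀ i, ∃ M : ℝ, ∀ ω, |X ω i| ≤ M * Z ω})
    (Ψ : (Ω → Fin N → ℝ) → ℝ)
    (hmono : ∀ X ∈ CZ, ∀ Y ∈ CZ, (∀ ω, X ω ≤ Y ω) → Ψ X ≤ Ψ Y)
    (hconv : ∀ X ∈ CZ, ∀ Y ∈ CZ, ∀ t : ℝ, 0 ≤ t → t ≤ 1 →
      Ψ (fun ω i => t * X ω i + (1 - t) * Y ω i) ≤ t * Ψ X + (1 - t) * Ψ Y)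
    (X : Ω → Fin N → ℝ) (hX : X ∈ CZ)
    (htail : ∃ ε > (0 : ℝ), Tendsto
      (fun z : ℝ => Ψ (fun ω i => X ω i + ε * max (Z ω - z) 0)) atTop (nhds (Ψ X)))
    (Xn : ℕ → (Ω → Fin N → ℝ)) (hXn : ∀ n, Xn n ∈ CZ)
    (hanti : ∀ ω i, Antitone (fun n => Xn n ω i))
    (hlim : ∀ ω i, Tendsto (fun n => Xn n ω i) atTop (nhds 0)) :
    ∃ η > (0 : ℝ),
      Antitone (fun n => Ψ (fun ω i => X ω i + η * Xn n ω i) - Ψ X) ∧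
      Tendsto (fun n => Ψ (fun ω i => X ω i + η * Xn n ω i) - Ψ X) atTop (nhds 0) := by
  obtain rfl : CZ = (weightedSpace (Fin N) Z : Set (Ω → Fin N → ℝ)) := hCZ
  obtain ⟨ε, hε, htail⟩ := htail
  have hconvOn : ConvexOn ℝ (weightedSpace (Fin N) Z : Set (Ω → Fin N → ℝ)) Ψ :=
    ⟨Submodule.convex _, fun x hx y hy a b ha _ hab => by
      obtain rfl : b = 1 - a := by linarith
      exact hconv x hx y hy a ha (by linarith)⟩
  have hmonoOn : MonotoneOn Ψ (weightedSpace (Fin N) Z : Set (Ω → Fin N → ℝ)) :=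
    fun x hx y hy hxy => hmono x hx y hy hxy
  obtain ⟨M, hM, hM0⟩ :=
    exists_pos_bound_of_mem_weightedSpace (fun ω => zero_le_one.trans (hZ1 ω)) (hXn 0)
  set η := ε / (4 * M)
  have hη : 0 < η := by positivity
  have hmem : ∀ n, X + η • Xn n ∈ weightedSpace (Fin N) Z :=
    fun n => add_mem hX (Submodule.smul_mem _ η (hXn n))
  have hge : ∀ n, Ψ X ≤ Ψ (X + η • Xn n) := fun n =>
    hmonoOn hX (hmem n) (le_add_of_nonneg_right (smul_nonneg hη.le
      fun ω i => (hanti ω i).le_of_tendsto (hlim ω i) n))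
  have hΨanti : Antitone fun n => Ψ (X + η • Xn n) := fun m n hmn =>
    hmonoOn (hmem n) (hmem m) (add_le_add_right (smul_le_smul_of_nonneg_left
      (fun ω i => hanti ω i hmn) hη.le) _)
  refine ⟨η, hη, fun m n hmn => sub_le_sub_right (hΨanti hmn) _,
    tendsto_order.2 ⟨fun a ha => .of_forall fun n => ha.trans_le (sub_nonneg.2 (hge n)),
      fun a ha => ?_⟩⟩
  obtain ⟨n₀, hn₀⟩ := exists_lt_add_of_tendsto_excess hZc hZ1 hZcomp hconvOn hmonoOn hX hε
    htail hXn hanti hlim hM (fun n ω i => (hanti ω i n.zero_le).trans (hM0 ω i)) ha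
  exact eventually_atTop.2 ⟨n₀, fun n hn => sub_lt_iff_lt_add'.2 ((hΨanti hn).trans_lt hn₀)⟩

/-- if Ψ is increasing and convex on C_Z and
`lim_{z→∞} Ψ(X + ε(Z−z)⁺·𝟏) = Ψ(X)` for some ε > 0, then for every sequence
(X_n) in C_Z with X_n ↓ 0 pointwise, there is η > 0 with Ψ_X(η X_n) ↓ 0,
where Ψ_X(Y) = Ψ(X+Y) − Ψ(X). -/
theorem stmt_8 {Ω : Type*} [MetricSpace Ω] [Nonempty Ω] {N : ℕ}
    (Z : Ω → ℝ) (hZc : Continuous Z) (hZ1 : ∀ ω, 1 ≤ Z ω)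
    (hZcomp : ∀ z : ℝ, IsCompact {ω | Z ω ≤ z})
    (CZ : Set (Ω → Fin N → ℝ))
    (hCZ : CZ = {X : Ω → Fin N → ℝ | Continuous X ∧ ∀ i, ∃ M : ℝ, ∀ ω, |X ω i| ≤ M * Z ω})
    (Ψ : (Ω → Fin N → ℝ) → ℝ)
    (hmono : ∀ X ∈ CZ, ∀ Y ∈ CZ, (∀ ω, X ω ≤ Y ω) → Ψ X ≤ Ψ Y)
    (hconv : ∀ X ∈ CZ, ∀ Y ∈ CZ, ∀ t : ℝ, 0 ≤ t → t ≤ 1 →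
      Ψ (fun ω i => t * X ω i + (1 - t) * Y ω i) ≤ t * Ψ X + (1 - t) * Ψ Y)
    (X : Ω → Fin N → ℝ) (hX : X ∈ CZ)
    (htail : ∃ ε > (0 : ℝ), Tendsto
      (fun z : ℝ => Ψ (fun ω i => X ω i + ε * max (Z ω - z) 0)) atTop (nhds (Ψ X)))
    (Xn : ℕ → (Ω → Fin N → ℝ)) (hXn : ∀ n, Xn n ∈ CZ)
    (hanti : ∀ ω i, Antitone (fun n => Xn n ω i))
    (hlim : ∀ ω i, Tendsto (fun n => Xn n ω i) atTop (nhds 0)) :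
    ∃ η > (0 : ℝ),
      Antitone (fun n => Ψ (fun ω i => X ω i + η * Xn n ω i) - Ψ X) ∧
      Tendsto (fun n => Ψ (fun ω i => X ω i + η * Xn n ω i) - Ψ X) atTop (nhds 0) :=
  stmt_8_general Z hZc hZ1 hZcomp CZ hCZ Ψ hmono hconv X hX htail Xn hXn hanti hlim
end

section
/- Suppose the dual representation holds: ρ is real valued on B_Z, ρ(0) = γ, and ρ(X) = max over Q = (Q₁,…,Q_N) ∈ P_Z of (∑ᵢ E^{Qᵢ}[−Xⁱ] − ρ*(−Q)) for all X ∈ C_Z. Then there exists Q ∈ P_Z such that ∑ᵢ E^{Qᵢ}[Xⁱ] − γ ≥ 0 for all X ∈ C_Z satisfying Λ∘(X+g) ∈ A for some g ∈ G. -/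
open MeasureTheory Filter Topology
open scoped BigOperators

variable {Ω : Type*} [MeasurableSpace Ω] {N : ℕ}

/-- The robust market-adjusted systemic risk measure
`ρ(X) = inf { ∑ᵢ mⁱ | m ∈ ℝ^N, ∃ g ∈ G, Λ∘(m+X+g) ∈ A }`, `inf ∅ = +∞`. -/
noncomputable def rho (A : Set (Ω → ℝ)) (G : Set (Ω → Fin N → ℝ))
    (Λ : (Fin N → ℝ) → ℝ) (X : Ω → Fin N → ℝ) : EReal :=
  sInf ((fun m : Fin N → ℝ => ((∑ i, m i : ℝ) : EReal)) ''
    {m | ∃ g ∈ G, (fun ω => Λ (fun i => m i + X ω i + g ω i)) ∈ A})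

/-- `P_Z`: N-tuples of Borel probability measures integrating Z. -/
def memPZ (Z : Ω → ℝ) (Q : Fin N → Measure Ω) : Prop :=
  (∀ i, IsProbabilityMeasure (Q i)) ∧ ∀ i, Integrable Z (Q i)

/-- The penalty `ρ*(−Q) = sup_{X ∈ C_Z} (∑ᵢ E^{Qᵢ}[−Xⁱ] − ρ(X))`. -/
noncomputable def rhoStarNeg (A : Set (Ω → ℝ)) (G : Set (Ω → Fin N → ℝ))
    (Λ : (Fin N → ℝ) → ℝ) (CZ : Set (Ω → Fin N → ℝ)) (Q : Fin N → Measure Ω) : EReal :=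
  ⨆ X ∈ CZ, (((∑ i, ∫ ω, -X ω i ∂(Q i) : ℝ) : EReal) - rho A G Λ X)

/-! Take the maximiser `Q` of the dual representation at `X = 0`: since `ρ(0) = γ`, it has
`ρ*(−Q) = −γ`. An acceptable `X` has `ρ(X) ≤ 0` (take `m = 0`), so the dual inequality for this `Q`
reads `−∑ᵢ E^{Qᵢ}[Xⁱ] + γ ≤ ρ(X) ≤ 0`. -/

lemma rho_nonpos_of_acceptable {α : Type*} {A : Set (α → ℝ)} {G : Set (α → Fin N → ℝ)}
    {Λ : (Fin N → ℝ) → ℝ} {X : α → Fin N → ℝ}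
    (hX : ∃ g ∈ G, (fun ω => Λ (fun i => X ω i + g ω i)) ∈ A) : rho A G Λ X ≤ 0 := by
  obtain ⟨g, hg, hA⟩ := hX
  refine sInf_le ⟨0, ⟨g, hg, ?_⟩, by simp⟩
  simpa using hA

lemma rhoStarNeg_eq_neg_of_rho_zero_eq {A : Set (Ω → ℝ)} {G : Set (Ω → Fin N → ℝ)}
    {Λ : (Fin N → ℝ) → ℝ} {CZ : Set (Ω → Fin N → ℝ)} {Q : Fin N → Measure Ω} {γ : ℝ}
    (hrho0 : rho A G Λ 0 = γ)
    (hQ : rho A G Λ 0 =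
      ((∑ i, ∫ ω, -(0 : Ω → Fin N → ℝ) ω i ∂(Q i) : ℝ) : EReal) - rhoStarNeg A G Λ CZ Q) :
    rhoStarNeg A G Λ CZ Q = ((-γ : ℝ) : EReal) := by
  simp only [Pi.zero_apply, neg_zero, integral_zero, Finset.sum_const_zero, EReal.coe_zero,
    zero_sub, hrho0] at hQ
  rw [EReal.coe_neg, hQ, neg_neg]

theorem stmt_12_general [MetricSpace Ω]
    (Z : Ω → ℝ)
    (A : Set (Ω → ℝ)) (G : Set (Ω → Fin N → ℝ))
    (Λ : (Fin N → ℝ) → ℝ)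
    (CZ : Set (Ω → Fin N → ℝ))
    (hCZ : CZ = {X : Ω → Fin N → ℝ | Continuous X ∧ ∀ i, ∃ M : ℝ, ∀ ω, |X ω i| ≤ M * Z ω})
    (γ : ℝ)
    (hrho0 : rho A G Λ 0 = (γ : EReal))
    (hdual : ∀ X ∈ CZ,
      (∀ Q : Fin N → Measure Ω, memPZ Z Q →
        ((∑ i, ∫ ω, -X ω i ∂(Q i) : ℝ) : EReal) - rhoStarNeg A G Λ CZ Q ≤ rho A G Λ X) ∧
      (∃ Q : Fin N → Measure Ω, memPZ Z Q ∧
        rho A G Λ X = ((∑ i, ∫ ω, -X ω i ∂(Q i) : ℝ) : EReal) - rhoStarNeg A G Λ CZ Q)) :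
    ∃ Q : Fin N → Measure Ω, memPZ Z Q ∧
      ∀ X ∈ CZ, (∃ g ∈ G, (fun ω => Λ (fun i => X ω i + g ω i)) ∈ A) →
        0 ≤ (∑ i, ∫ ω, X ω i ∂(Q i)) - γ := by
  have h0CZ : (0 : Ω → Fin N → ℝ) ∈ CZ := by
    rw [hCZ]
    exact ⟨continuous_const, fun _ => ⟨0, fun _ => by simp⟩⟩
  obtain ⟨Q, hQ, hmax⟩ := (hdual 0 h0CZ).2
  refine ⟨Q, hQ, fun X hX hacc => ?_⟩
  have hdualX : ((∑ i, ∫ ω, -X ω i ∂(Q i) : ℝ) : EReal) - ((-γ : ℝ) : EReal) ≤ 0 := by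
    rw [← rhoStarNeg_eq_neg_of_rho_zero_eq hrho0 hmax]
    exact ((hdual X hX).1 Q hQ).trans (rho_nonpos_of_acceptable hacc)
  rw [← EReal.coe_sub, ← EReal.coe_zero, EReal.coe_le_coe_iff] at hdualX
  simp only [integral_neg, Finset.sum_neg_distrib] at hdualX
  linarith

/-- if the dual representation holds (ρ real valued on B_Z, ρ(0) = γ and
`ρ(X) = max_{Q ∈ P_Z} (∑ᵢ E^{Qᵢ}[−Xⁱ] − ρ*(−Q))` on C_Z), then there exists Q ∈ P_Z with
`∑ᵢ E^{Qᵢ}[Xⁱ] − γ ≥ 0` for all X ∈ C_Z acceptable after adding some g ∈ G. -/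
theorem stmt_12 [MetricSpace Ω] [BorelSpace Ω] [Nonempty Ω]
    (Z : Ω → ℝ) (hZc : Continuous Z) (hZ1 : ∀ ω, 1 ≤ Z ω)
    (hZcomp : ∀ z : ℝ, IsCompact {ω | Z ω ≤ z})
    (A : Set (Ω → ℝ)) (G : Set (Ω → Fin N → ℝ))
    (hAmono : ∀ x y : Ω → ℝ, y ∈ A → (∀ ω, y ω ≤ x ω) → x ∈ A)
    (h0A : (0 : Ω → ℝ) ∈ A) (h0G : (0 : Ω → Fin N → ℝ) ∈ G)
    (Λ : (Fin N → ℝ) → ℝ) (hΛmono : Monotone Λ)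
    (hΛconc : ConcaveOn ℝ Set.univ Λ) (hΛ0 : Λ 0 = 0)
    (hCconv : Convex ℝ {X : Ω → Fin N → ℝ | ∃ g ∈ G, (fun ω => Λ (X ω + g ω)) ∈ A})
    (CZ : Set (Ω → Fin N → ℝ))
    (hCZ : CZ = {X : Ω → Fin N → ℝ | Continuous X ∧ ∀ i, ∃ M : ℝ, ∀ ω, |X ω i| ≤ M * Z ω})
    (BZ : Set (Ω → Fin N → ℝ))
    (hBZ : BZ = {X : Ω → Fin N → ℝ | Measurable X ∧ ∀ i, ∃ M : ℝ, ∀ ω, |X ω i| ≤ M * Z ω})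
    (γ : ℝ) (hγ : γ ≤ 0)
    (hreal : ∀ X ∈ BZ, rho A G Λ X ≠ ⊤ ∧ rho A G Λ X ≠ ⊥)
    (hrho0 : rho A G Λ 0 = (γ : EReal))
    (hdual : ∀ X ∈ CZ,
      (∀ Q : Fin N → Measure Ω, memPZ Z Q →
        ((∑ i, ∫ ω, -X ω i ∂(Q i) : ℝ) : EReal) - rhoStarNeg A G Λ CZ Q ≤ rho A G Λ X) ∧
      (∃ Q : Fin N → Measure Ω, memPZ Z Q ∧
        rho A G Λ X = ((∑ i, ∫ ω, -X ω i ∂(Q i) : ℝ) : EReal) - rhoStarNeg A G Λ CZ Q)) :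
    ∃ Q : Fin N → Measure Ω, memPZ Z Q ∧
      ∀ X ∈ CZ, (∃ g ∈ G, (fun ω => Λ (fun i => X ω i + g ω i)) ∈ A) →
        0 ≤ (∑ i, ∫ ω, X ω i ∂(Q i)) - γ :=
  stmt_12_general Z A G Λ CZ hCZ γ hrho0 hdual
end
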